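/- arXiv:2305.08607 — 4 statements merged into one kernel-verified Lean document; each statement's English description precedes it below -/
import Mathlib

section
/- In DPAL, traditional announcements hold in the unambiguous depths setting: if a model satisfies d(a,s) = d(a,s') whenever s ∼_a s' (for all agents), then for all formulas φ, ψ the formula P_a^{d(φ)} → ([φ] K_a ψ ↔ (φ → K_a [φ]ψ)) is true at every state. -/
/-- Formulas of DPAL. -/
inductive Form (A P : Type) : Type
  | atom : P → Form A P
  | eqd  : A → ℕ → Form A P
  | ged  : A → ℕ → Form A P
  | neg  : Form A P → Form A P
  | and  : Form A P → Form A P → Form A P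
  | imp  : Form A P → Form A P → Form A P
  | kinf : A → Form A P → Form A P
  | k    : A → Form A P → Form A P
  | ann  : Form A P → Form A P → Form A P

namespace Form
/-- Modal depth of a formula; `d([φ]ψ) = d(φ) + d(ψ)`. -/
def md {A P : Type} : Form A P → ℕ
  | atom _ => 0
  | eqd _ _ => 0
  | ged _ _ => 0
  | neg φ => φ.md
  | and φ ψ => max φ.md ψ.md
  | imp φ ψ => max φ.md ψ.md
  | kinf _ φ => φ.md + 1
  | k _ φ => φ.md + 1
  | ann φ ψ => φ.md + ψ.md

/-- Biconditional, as an abbreviation. -/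
def iff {A P : Type} (φ ψ : Form A P) : Form A P := (φ.imp ψ).and (ψ.imp φ)

/-- Disjunction, as an abbreviation. -/
def or {A P : Type} (φ ψ : Form A P) : Form A P := .neg ((Form.neg φ).and (Form.neg ψ))
end Form

/-- A DPAL model: states, equivalence relations, valuation, depth assignment. -/
structure Model (A P : Type) where
  S : Type
  r : A → S → S → Prop
  equiv : ∀ a, Equivalence (r a)
  V : S → P → Prop
  d : A → S → ℕ

/-- The base relation `R_a` of the DPAL update, for announcement extension `X`
(the states satisfying the announcement) and announcement depth `k`: relations
are copied on the negative (`false`) copy of the model and on the positive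
(`true`) copy restricted to states satisfying the announcement, and the
positive copy of a state is linked to its negative copy exactly when the agent
is too shallow for the announcement there. -/
def updR {A P : Type} (M : Model A P) (X : M.S → Prop) (k : ℕ) (a : A) :
    Bool × M.S → Bool × M.S → Prop := fun x y =>
  (x.1 = y.1 ∧ M.r a x.2 y.2 ∧ (x.1 = true → X x.2 ∧ X y.2)) ∨
  (x.1 = true ∧ y.1 = false ∧ x.2 = y.2 ∧ X x.2 ∧ ¬ (M.d a x.2 ≥ k))

/-- The DPAL model update `M|φ`: a negative copy of every state together with a
positive copy of every state satisfying the announcement (spurious positive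
copies of other states remain as unreachable isolated points of the carrier
`Bool × S`); the relation is the equivalence closure of `updR`; depths are
decremented by `k` on the positive copy when the agent is deep enough. -/
def upd {A P : Type} (M : Model A P) (X : M.S → Prop) (k : ℕ) : Model A P where
  S := Bool × M.S
  r a := Relation.EqvGen (updR M X k a)
  equiv a := Relation.EqvGen.is_equivalence _
  V x := M.V x.2
  d a x := if x.1 = true ∧ M.d a x.2 ≥ k then M.d a x.2 - k else M.d a x.2

/-- DPAL satisfaction; announcements are evaluated at the positive copy
`(true, s)` of the current state. -/
def sat {A P : Type} : Form A P → (M : Model A P) → M.S → Prop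
  | .atom p, M, s => M.V s p
  | .eqd a n, M, s => M.d a s = n
  | .ged a n, M, s => M.d a s ≥ n
  | .neg φ, M, s => ¬ sat φ M s
  | .and φ ψ, M, s => sat φ M s ∧ sat ψ M s
  | .imp φ ψ, M, s => sat φ M s → sat ψ M s
  | .kinf a φ, M, s => ∀ t, M.r a s t → sat φ M t
  | .k a φ, M, s => M.d a s ≥ φ.md ∧ ∀ t, M.r a s t → sat φ M t
  | .ann φ ψ, M, s => sat φ M s → sat ψ (upd M (fun t => sat φ M t) φ.md) (true, s)

private lemma reach_pos {A P : Type} (M : Model A P) (X : M.S → Prop) (k : ℕ) (a : A)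
    (hunamb : ∀ s s', M.r a s s' → M.d a s = M.d a s')
    (s : M.S) (hd : M.d a s ≥ k)
    {x y : Bool × M.S} (h : Relation.EqvGen (updR M X k a) x y) :
    (x.1 = true ∧ X x.2 ∧ M.r a s x.2) ↔ (y.1 = true ∧ X y.2 ∧ M.r a s y.2) := by
  induction h with
  | rel x y hxy =>
      constructor
      · rintro ⟨hx1, hXx, hrx⟩
        have hdx : M.d a x.2 ≥ k := (hunamb s x.2 hrx) ▸ hd
        rcases hxy with ⟨h1, hr, hX2⟩ | ⟨_, _, _, _, hlt⟩
        · exact ⟨h1 ▸ hx1, (hX2 hx1).2, (M.equiv a).trans hrx hr⟩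
        · exact absurd hdx hlt
      · rintro ⟨hy1, hXy, hry⟩
        rcases hxy with ⟨h1, hr, hX2⟩ | ⟨_, hy1', _, _, _⟩
        · have hx1 : x.1 = true := h1.trans hy1
          exact ⟨hx1, (hX2 hx1).1, (M.equiv a).trans hry ((M.equiv a).symm hr)⟩
        · simp [hy1'] at hy1
  | refl => exact Iff.rfl
  | symm _ _ _ ih => exact ih.symm
  | trans _ _ _ _ _ ih1 ih2 => exact ih1.trans ih2

/-- Traditional announcements in DPAL in the unambiguous depths setting: if
every agent knows its own depth exactly (i.e. `s ∼_a s'` implies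
`d(a,s) = d(a,s')`), then `P_a^{d(φ)} → ([φ] K_a ψ ↔ (φ → K_a [φ]ψ))` is true
at every state. -/
theorem dpal_traditional_announcements {A P : Type} (M : Model A P)
    (hunamb : ∀ (a : A) (s s' : M.S), M.r a s s' → M.d a s = M.d a s')
    (a : A) (φ ψ : Form A P) (s : M.S) :
    sat (Form.imp (.ged a φ.md)
      (Form.iff (.ann φ (.k a ψ)) (.imp φ (.k a (.ann φ ψ))))) M s := by
  intro hd
  have hd' : M.d a s ≥ φ.md := hd
  set k := φ.md with hk
  set X : M.S → Prop := fun t => sat φ M t with hX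
  constructor
  · intro h hXs
    obtain ⟨hdep, hall⟩ := h hXs
    have hval : (upd M X k).d a (true, s) = M.d a s - k := if_pos ⟨rfl, hd'⟩
    have hdep' : M.d a s - k ≥ ψ.md := hval ▸ hdep
    refine ⟨?_, ?_⟩
    · show M.d a s ≥ (Form.ann φ ψ).md
      simp only [Form.md]
      omega
    · intro t hrt hXt
      exact hall (true, t) (Relation.EqvGen.rel _ _ (Or.inl ⟨rfl, hrt, fun _ => ⟨hXs, hXt⟩⟩))
  · intro h hXs
    obtain ⟨hdep, hall⟩ := h hXs
    have hdep' : M.d a s ≥ k + ψ.md := by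
      simpa only [Form.md] using hdep
    refine ⟨?_, ?_⟩
    · show (upd M X k).d a (true, s) ≥ ψ.md
      have hval : (upd M X k).d a (true, s) = M.d a s - k := if_pos ⟨rfl, hd'⟩
      omega
    · intro y hy
      have hrefl : (true, s).1 = true ∧ X (true, s).2 ∧ M.r a s (true, s).2 :=
        ⟨rfl, hXs, (M.equiv a).refl s⟩
      obtain ⟨hy1, hXy, hry⟩ := (reach_pos M X k a (hunamb a) s hd' hy).mp hrefl
      have := hall y.2 hry hXy
      obtain ⟨b, t⟩ := y
      cases hy1
      exact this
end

section
/- In DPAL, the generalized traditional announcement axiom (TA') is valid: for all formulas φ, ψ and agent a, K_a^∞(φ → P_a^{d(φ)}) → ([φ] K_a ψ ↔ (φ → K_a [φ]ψ)) holds at every pointed model. -/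
/-- Under the hypothesis that every φ-state related to `s` has sufficient depth,
membership in the class `{(true, t) : t ∼ s, X t}` is invariant along `updR`-paths. -/
lemma updR_class {A P : Type} (M : Model A P) (a : A) (X : M.S → Prop) (k : ℕ) (s : M.S)
    (H : ∀ t, M.r a s t → X t → M.d a t ≥ k) :
    ∀ x y, Relation.EqvGen (updR M X k a) x y →
      ((x.1 = true ∧ M.r a s x.2 ∧ X x.2) ↔ (y.1 = true ∧ M.r a s y.2 ∧ X y.2)) := by
  intro x y h
  induction h with
  | rel x y hr =>
    constructor
    · rintro ⟨hx1, hxs, hXx⟩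
      rcases hr with ⟨h1, h2, h3⟩ | ⟨h1, h2, h3, h4, h5⟩
      · exact ⟨h1 ▸ hx1, (M.equiv a).trans hxs h2, (h3 hx1).2⟩
      · exact absurd (H x.2 hxs hXx) h5
    · rintro ⟨hy1, hys, hXy⟩
      rcases hr with ⟨h1, h2, h3⟩ | ⟨h1, h2, h3, h4, h5⟩
      · have hx1 : x.1 = true := h1.trans hy1
        exact ⟨hx1, (M.equiv a).trans hys ((M.equiv a).symm h2), (h3 hx1).1⟩
      · exact absurd h2 (by simp [hy1])
  | refl x => exact Iff.rfl
  | symm _ _ _ ih => exact ih.symm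
  | trans _ _ _ _ _ ih1 ih2 => exact ih1.trans ih2

/-- Generalized traditional announcements (TA') in DPAL:
`K_a^∞(φ → P_a^{d(φ)}) → ([φ] K_a ψ ↔ (φ → K_a [φ]ψ))` is valid. -/
theorem dpal_TA' {A P : Type} (a : A) (φ ψ : Form A P)
    (M : Model A P) (s : M.S) :
    sat (Form.imp (.kinf a (.imp φ (.ged a φ.md)))
      (Form.iff (.ann φ (.k a ψ)) (.imp φ (.k a (.ann φ ψ))))) M s := by
  intro H
  have H' : ∀ t, M.r a s t → sat φ M t → M.d a t ≥ φ.md := H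
  set X : M.S → Prop := fun t => sat φ M t with hX
  set k := φ.md with hk
  set M' := upd M X k with hM'
  constructor
  · -- [φ]K_a ψ → (φ → K_a [φ]ψ)
    intro h1 hφ
    have hds : M.d a s ≥ k := H' s ((M.equiv a).refl s) hφ
    have h1' := h1 hφ
    obtain ⟨hd, hall⟩ := h1'
    have hd' : M'.d a (true, s) = M.d a s - k := if_pos ⟨rfl, hds⟩
    rw [hd'] at hd
    refine ⟨?_, ?_⟩
    · show M.d a s ≥ (Form.ann φ ψ).md
      simp only [Form.md]
      omega
    · intro t hst hφt
      apply hall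
      exact Relation.EqvGen.rel _ _ (Or.inl ⟨rfl, hst, fun _ => ⟨hφ, hφt⟩⟩)
  · -- (φ → K_a [φ]ψ) → [φ]K_a ψ
    intro h2 hφ
    have hds : M.d a s ≥ k := H' s ((M.equiv a).refl s) hφ
    obtain ⟨hd, hall⟩ := h2 hφ
    have hdmd : M.d a s ≥ φ.md + ψ.md := hd
    refine ⟨?_, ?_⟩
    · show M'.d a (true, s) ≥ ψ.md
      have hd' : M'.d a (true, s) = M.d a s - k := if_pos ⟨rfl, hds⟩
      rw [hd']
      omega
    · intro y hy
      have := (updR_class M a X k s H' (true, s) y hy).mp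
        ⟨rfl, (M.equiv a).refl s, hφ⟩
      obtain ⟨hy1, hys, hXy⟩ := this
      have := hall y.2 hys hXy
      have hyeq : y = (true, y.2) := Prod.ext hy1 rfl
      rw [hyeq]
      exact this
end

section
/- In DPAL, the depth adjustment axiom is valid: for all n ∈ ℕ, [φ] E_a^n ↔ (φ → ((P_a^{d(φ)} ∧ E_a^{n+d(φ)}) ∨ (¬P_a^{d(φ)} ∧ E_a^n))) holds at every pointed model. -/
theorem Nat.ite_le_sub_eq_iff {d k n : ℕ} :
    (if k ≤ d then d - k else d) = n ↔ (k ≤ d ∧ d = n + k) ∨ (¬ k ≤ d ∧ d = n) := by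
  split_ifs with h <;> omega

namespace Form

variable {A P : Type}

theorem sat_iff_iff (φ ψ : Form A P) (M : Model A P) (s : M.S) :
    sat (φ.iff ψ) M s ↔ (sat φ M s ↔ sat ψ M s) := by
  simp only [Form.iff, sat, iff_def]

theorem sat_or_iff (φ ψ : Form A P) (M : Model A P) (s : M.S) :
    sat (φ.or ψ) M s ↔ sat φ M s ∨ sat ψ M s := by
  simp only [Form.or, sat, not_and_or, not_not]

end Form

theorem upd_d_true {A P : Type} (M : Model A P) (X : M.S → Prop) (k : ℕ) (a : A) (s : M.S) :
    (upd M X k).d a (true, s) = if k ≤ M.d a s then M.d a s - k else M.d a s := by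
  simp only [upd, true_and, ge_iff_le]

theorem sat_ann_eqd_iff {A P : Type} (φ : Form A P) (a : A) (n : ℕ) (M : Model A P) (s : M.S) :
    sat (.ann φ (.eqd a n)) M s ↔
      (sat φ M s → (if φ.md ≤ M.d a s then M.d a s - φ.md else M.d a s) = n) := by
  simp only [sat, upd_d_true]

/-- Depth adjustment in DPAL: for all `n : ℕ`,
`[φ] E_a^n ↔ (φ → ((P_a^{d(φ)} ∧ E_a^{n+d(φ)}) ∨ (¬P_a^{d(φ)} ∧ E_a^n)))`
is valid. -/
theorem dpal_depth_adjustment {A P : Type} (a : A) (n : ℕ) (φ : Form A P)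
    (M : Model A P) (s : M.S) :
    sat (Form.iff (.ann φ (.eqd a n))
      (.imp φ (Form.or (.and (.ged a φ.md) (.eqd a (n + φ.md)))
        (.and (.neg (.ged a φ.md)) (.eqd a n))))) M s := by
  rw [Form.sat_iff_iff, sat_ann_eqd_iff, sat, Form.sat_or_iff]
  simp only [sat, ge_iff_le, Nat.ite_le_sub_eq_iff]
end

section
/- In DPAL, the update model has bounded size: for any finite model M and formula φ, the updated model M|φ satisfies ‖M|φ‖ ≤ 4‖M‖, where ‖·‖ is the number of states plus the total number of pairs in all agents' relations. -/
/-- The size of a model: number of states plus the total number of pairs in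
all agents' relations. -/
noncomputable def msize {A P : Type} [Fintype A] (M : Model A P) : ℕ :=
  Nat.card M.S + ∑ a : A, Nat.card {p : M.S × M.S // M.r a p.1 p.2}


lemma eqvGen_proj {A P : Type} (M : Model A P) (X : M.S → Prop) (k : ℕ) (a : A)
    {x y : Bool × M.S} (h : Relation.EqvGen (updR M X k a) x y) :
    M.r a x.2 y.2 := by
  induction h with
  | rel x y h =>
    rcases h with ⟨_, h, _⟩ | ⟨_, _, h, _⟩
    · exact h
    · rw [h]; exact (M.equiv a).refl _
  | refl x => exact (M.equiv a).refl _
  | symm x y _ ih => exact (M.equiv a).symm ih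
  | trans x y z _ _ ih1 ih2 => exact (M.equiv a).trans ih1 ih2

/-- The DPAL update has bounded size: for any finite model `M` and formula
`φ`, `‖M|φ‖ ≤ 4‖M‖`. -/
theorem dpal_update_size {A P : Type} [Fintype A] (M : Model A P) [Finite M.S]
    (φ : Form A P) :
    msize (upd M (fun s => sat φ M s) φ.md) ≤ 4 * msize M := by
  have hS : Nat.card (Bool × M.S) = 2 * Nat.card M.S := by
    simp [Nat.card_prod]
  have key : ∀ a : A,
      Nat.card {p : (Bool × M.S) × (Bool × M.S) //
        (upd M (fun s => sat φ M s) φ.md).r a p.1 p.2} ≤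
      4 * Nat.card {p : M.S × M.S // M.r a p.1 p.2} := by
    intro a
    have hinj : Function.Injective
        (fun p : {p : (Bool × M.S) × (Bool × M.S) //
            (upd M (fun s => sat φ M s) φ.md).r a p.1 p.2} =>
          ((p.1.1.1, p.1.2.1, ⟨(p.1.1.2, p.1.2.2), eqvGen_proj M _ _ a p.2⟩) :
            Bool × Bool × {q : M.S × M.S // M.r a q.1 q.2})) := by
      rintro ⟨⟨⟨b1, s1⟩, ⟨b2, s2⟩⟩, h⟩ ⟨⟨⟨c1, t1⟩, ⟨c2, t2⟩⟩, h'⟩ he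
      simp only [Prod.mk.injEq, Subtype.mk.injEq] at he ⊢
      tauto
    calc Nat.card {p : (Bool × M.S) × (Bool × M.S) //
          (upd M (fun s => sat φ M s) φ.md).r a p.1 p.2}
        ≤ Nat.card (Bool × Bool × {q : M.S × M.S // M.r a q.1 q.2}) :=
          Nat.card_le_card_of_injective _ hinj
      _ = 4 * Nat.card {q : M.S × M.S // M.r a q.1 q.2} := by
          simp [Nat.card_prod]; ring
  have hsum : ∑ a : A, Nat.card {p : (Bool × M.S) × (Bool × M.S) //
        (upd M (fun s => sat φ M s) φ.md).r a p.1 p.2} ≤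
      4 * ∑ a : A, Nat.card {p : M.S × M.S // M.r a p.1 p.2} := by
    rw [Finset.mul_sum]
    exact Finset.sum_le_sum fun a _ => key a
  have : msize (upd M (fun s => sat φ M s) φ.md) =
      Nat.card (Bool × M.S) + ∑ a : A, Nat.card {p : (Bool × M.S) × (Bool × M.S) //
        (upd M (fun s => sat φ M s) φ.md).r a p.1 p.2} := rfl
  rw [this, hS]
  unfold msize
  omega
end
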